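/- arXiv:2509.02188 — 3 statements merged into one kernel-verified Lean document; each statement's English description precedes it below -/
import Mathlib

section
/- Let d ∈ ℕ with d ≥ 1, let c₁,...,c_d be nonnegative integers with ∑_{i=1}^d c_i ≥ d, and assume that whenever c_i = 0 for some i < d, then c_{i+1} = 0. Let f : ℕ → ℝ be strictly decreasing and positive. Then ∑_{i=1}^d c_i f(i) ≥ ∑_{i=1}^d f(i). -/
/-!
The nonzero entries of `c` form an initial segment `1, …, k`. Comparing every `f i` with the
threshold `f k`, the factors `c i - 1` and `f i - f k` never have opposite signs, so
`∑ (c i - 1) f i ≥ f k ∑ (c i - 1) ≥ 0`.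
-/

open Finset

theorem exists_nonzero_prefix_of_zero_propagates {c : ℕ → ℕ} {d : ℕ}
    (hgap : ∀ i, 1 ≤ i → i < d → c i = 0 → c (i + 1) = 0) :
    ∃ k ≤ d, (∀ i, 1 ≤ i → i ≤ k → c i ≠ 0) ∧ ∀ i, k < i → i ≤ d → c i = 0 := by
  induction d with
  | zero => exact ⟨0, le_rfl, fun i hi hik => by omega, fun i hki hid => by omega⟩
  | succ d ih =>
    obtain ⟨k, hkd, hne, hzero⟩ := ih fun i hi hid => hgap i hi (by omega)
    rcases hkd.lt_or_eq with hlt | rfl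
    · have hcd : c (d + 1) = 0 := hgap d (by omega) (by omega) (hzero d hlt le_rfl)
      refine ⟨k, by omega, hne, fun i hki hid => ?_⟩
      rcases Nat.lt_or_ge i (d + 1) with hi | hi
      · exact hzero i hki (by omega)
      · rwa [show i = d + 1 by omega]
    · by_cases hcd : c (k + 1) = 0
      · exact ⟨k, by omega, hne, fun i hki hid => by rwa [show i = k + 1 by omega]⟩
      · refine ⟨k + 1, le_rfl, fun i hi hik => ?_, fun i hki hid => by omega⟩
        rcases Nat.lt_or_ge i (k + 1) with hlt | hge
        · exact hne i hi (by omega)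
        · rwa [show i = k + 1 by omega]

theorem Finset.mul_sum_le_sum_mul_of_mul_sub_nonneg {ι : Type*} (s : Finset ι) (a w : ι → ℝ)
    (t : ℝ) (h : ∀ i ∈ s, 0 ≤ a i * (w i - t)) :
    t * ∑ i ∈ s, a i ≤ ∑ i ∈ s, a i * w i := by
  have key : ∑ i ∈ s, a i * w i - t * ∑ i ∈ s, a i = ∑ i ∈ s, a i * (w i - t) := by
    rw [mul_sum, ← sum_sub_distrib]
    exact sum_congr rfl fun i _ => by ring
  linarith [sum_nonneg h]

theorem sum_weighted_ge_sum_general (d : ℕ) (c : ℕ → ℕ)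
    (hsum : (d : ℕ) ≤ ∑ i ∈ Icc 1 d, c i)
    (hgap : ∀ i, 1 ≤ i → i < d → c i = 0 → c (i + 1) = 0)
    (f : ℕ → ℝ) (hf : StrictAnti f) (hfpos : ∀ n, 0 < f n) :
    ∑ i ∈ Icc 1 d, f i ≤ ∑ i ∈ Icc 1 d, (c i : ℝ) * f i := by
  obtain ⟨k, -, hne, hzero⟩ := exists_nonzero_prefix_of_zero_propagates hgap
  have hsign : ∀ i ∈ Icc 1 d, 0 ≤ ((c i : ℝ) - 1) * (f i - f k) := by
    intro i hi
    rw [mem_Icc] at hi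
    rcases le_or_gt i k with hik | hki
    · have hc : (1 : ℝ) ≤ c i := by exact_mod_cast Nat.one_le_iff_ne_zero.mpr (hne i hi.1 hik)
      exact mul_nonneg (by linarith) (by linarith [hf.antitone hik])
    · rw [hzero i hki hi.2, Nat.cast_zero]
      exact mul_nonneg_of_nonpos_of_nonpos (by norm_num) (by linarith [hf hki])
  have hexcess : 0 ≤ ∑ i ∈ Icc 1 d, ((c i : ℝ) - 1) := by
    rw [sum_sub_distrib, ← Nat.cast_sum, sum_const, Nat.card_Icc, add_tsub_cancel_right,
      nsmul_one, sub_nonneg]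
    exact_mod_cast hsum
  have hmain := mul_sum_le_sum_mul_of_mul_sub_nonneg _ _ _ _ hsign
  have hsplit : ∑ i ∈ Icc 1 d, ((c i : ℝ) - 1) * f i
      = ∑ i ∈ Icc 1 d, (c i : ℝ) * f i - ∑ i ∈ Icc 1 d, f i := by
    rw [← sum_sub_distrib]
    exact sum_congr rfl fun i _ => by ring
  linarith [mul_nonneg (hfpos k).le hexcess]

theorem sum_weighted_ge_sum (d : ℕ) (hd : 1 ≤ d) (c : ℕ → ℕ)
    (hsum : (d : ℕ) ≤ ∑ i ∈ Icc 1 d, c i)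
    (hgap : ∀ i, 1 ≤ i → i < d → c i = 0 → c (i + 1) = 0)
    (f : ℕ → ℝ) (hf : StrictAnti f) (hfpos : ∀ n, 0 < f n) :
    ∑ i ∈ Icc 1 d, f i ≤ ∑ i ∈ Icc 1 d, (c i : ℝ) * f i :=
  sum_weighted_ge_sum_general d c hsum hgap f hf hfpos
end

section
/- For any integer r ≥ 4 and any integer d ≥ r - 1, if λ ≥ d then ∑_{i=1}^{d} i^{-λ} (r(r-1)^{i-1} - 1) < r(r-2). -/
open Finset

/-! The `i = 1` term equals `r - 1`. For `i ≥ 2` we bound `i ^ (-λ) ≤ i ^ (-d)` and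
`(r - 1) ^ (i - 1) ≤ d ^ (i - 1)`, so the term is at most `r * d ^ (i - 1) / i ^ d`, and
`d ^ i ≤ i ^ d` (as `log x / x` decreases beyond `e`) makes this at most `r / d`. The tail is then
below `r`, and `(r - 1) + r ≤ r (r - 2)` for `r ≥ 4`. The case `d = 3`, where `3 ^ 2 > 2 ^ 3`,
is checked directly. -/

theorem Real.rpow_le_rpow_swap {a b : ℝ} (ha : Real.exp 1 ≤ a) (hab : a ≤ b) :
    b ^ a ≤ a ^ b := by
  have ha0 : 0 < a := (Real.exp_pos 1).trans_le ha
  have hb0 : 0 < b := ha0.trans_le hab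
  have hlog : Real.log b / b ≤ Real.log a / a :=
    Real.log_div_self_antitoneOn ha (ha.trans hab) hab
  rw [div_le_div_iff₀ hb0 ha0] at hlog
  rw [← Real.log_le_log_iff (by positivity) (by positivity), Real.log_rpow hb0,
    Real.log_rpow ha0]
  linarith

theorem Nat.sq_le_two_pow {n : ℕ} (hn : 4 ≤ n) : n ^ 2 ≤ 2 ^ n := by
  induction n, hn using Nat.le_induction with
  | base => norm_num
  | succ n hn ih =>
    calc (n + 1) ^ 2 = n ^ 2 + (2 * n + 1) := by ring
    _ ≤ 2 ^ n + 2 ^ n := by nlinarith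
    _ = 2 ^ (n + 1) := by ring

theorem Nat.pow_le_pow_swap {i d : ℕ} (hi : 2 ≤ i) (hid : i ≤ d) (hd : 4 ≤ d) :
    d ^ i ≤ i ^ d := by
  obtain rfl | hi3 := hi.eq_or_lt
  · exact Nat.sq_le_two_pow hd
  have he : Real.exp 1 ≤ i := by
    have : (3 : ℝ) ≤ i := by exact_mod_cast hi3
    linarith [Real.exp_one_lt_d9]
  have := Real.rpow_le_rpow_swap he (Nat.cast_le (α := ℝ).mpr hid)
  simp only [Real.rpow_natCast] at this
  exact_mod_cast this

theorem sum_pow_pred_div_pow_lt_one {d : ℕ} (hd : 3 ≤ d) :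
    ∑ i ∈ Ioc 1 d, (d : ℝ) ^ (i - 1) / (i : ℝ) ^ d < 1 := by
  obtain rfl | hd4 := hd.eq_or_lt
  · rw [show Ioc 1 3 = {2, 3} from rfl, sum_pair (by norm_num)]
    norm_num
  have hd0 : (0 : ℝ) < d := by positivity
  have hterm : ∀ i ∈ Ioc 1 d, (d : ℝ) ^ (i - 1) / (i : ℝ) ^ d ≤ 1 / d := by
    intro i hi
    obtain ⟨hi1, hid⟩ := mem_Ioc.mp hi
    have hswap : (d : ℝ) ^ i ≤ (i : ℝ) ^ d := by exact_mod_cast Nat.pow_le_pow_swap hi1 hid hd4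
    rw [div_le_div_iff₀ (by positivity) hd0, one_mul, ← pow_succ, Nat.sub_add_cancel (by omega)]
    exact hswap
  calc ∑ i ∈ Ioc 1 d, (d : ℝ) ^ (i - 1) / (i : ℝ) ^ d
      ≤ ∑ _i ∈ Ioc 1 d, 1 / (d : ℝ) := sum_le_sum hterm
    _ = (d - 1) / d := by
      rw [sum_const, Nat.card_Ioc, nsmul_eq_mul, Nat.cast_sub (by omega)]
      ring
    _ < 1 := by rw [div_lt_one hd0]; linarith

theorem rpow_neg_mul_geom_sub_one_le {r l : ℝ} {d i : ℕ} (hr : 2 ≤ r) (hrd : r - 1 ≤ d)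
    (hdl : d ≤ l) (hi : 1 ≤ i) :
    (i : ℝ) ^ (-l) * (r * (r - 1) ^ (i - 1) - 1) ≤ r * ((d : ℝ) ^ (i - 1) / (i : ℝ) ^ d) := by
  have hi1 : (1 : ℝ) ≤ i := by exact_mod_cast hi
  have hdecay : (i : ℝ) ^ (-l) ≤ ((i : ℝ) ^ d)⁻¹ := by
    rw [← Real.rpow_natCast, ← Real.rpow_neg (by positivity)]
    exact Real.rpow_le_rpow_of_exponent_le hi1 (neg_le_neg hdl)
  have hgeom : r * (r - 1) ^ (i - 1) - 1 ≤ r * (d : ℝ) ^ (i - 1) := by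
    have := pow_le_pow_left₀ (by linarith) hrd (i - 1)
    nlinarith
  have hgeom0 : 0 ≤ r * (r - 1) ^ (i - 1) - 1 := by
    nlinarith [one_le_pow₀ (show (1 : ℝ) ≤ r - 1 by linarith) (n := i - 1)]
  calc (i : ℝ) ^ (-l) * (r * (r - 1) ^ (i - 1) - 1)
      ≤ ((i : ℝ) ^ d)⁻¹ * (r * (d : ℝ) ^ (i - 1)) :=
        mul_le_mul hdecay hgeom hgeom0 (by positivity)
    _ = r * ((d : ℝ) ^ (i - 1) / (i : ℝ) ^ d) := by ring

theorem power_decay_sum_bound_large_exponent (r d : ℕ) (hr : 4 ≤ r) (hd : r - 1 ≤ d)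
    (l : ℝ) (hl : (d : ℝ) ≤ l) :
    ∑ i ∈ Icc 1 d, (i : ℝ) ^ (-l) * ((r : ℝ) * ((r : ℝ) - 1) ^ (i - 1) - 1)
      < (r : ℝ) * ((r : ℝ) - 2) := by
  have hr4 : (4 : ℝ) ≤ r := by exact_mod_cast hr
  have hrd : (r : ℝ) - 1 ≤ d := by
    rw [← Nat.cast_pred (by omega)]
    exact_mod_cast hd
  have htail := sum_le_sum fun i (hi : i ∈ Ioc 1 d) ↦
    rpow_neg_mul_geom_sub_one_le (by linarith) hrd hl (mem_Ioc.mp hi).1.le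
  rw [← mul_sum] at htail
  have hS := sum_pow_pred_div_pow_lt_one (show 3 ≤ d by omega)
  calc ∑ i ∈ Icc 1 d, (i : ℝ) ^ (-l) * ((r : ℝ) * ((r : ℝ) - 1) ^ (i - 1) - 1)
      = (r - 1) + ∑ i ∈ Ioc 1 d, (i : ℝ) ^ (-l) * ((r : ℝ) * ((r : ℝ) - 1) ^ (i - 1) - 1) := by
        rw [← Ioc_insert_left (by omega : 1 ≤ d), sum_insert (by simp)]
        simp
    _ < (r - 1) + r * 1 := by nlinarith
    _ ≤ (r : ℝ) * ((r : ℝ) - 2) := by nlinarith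
end

section
/- Let r ≥ 3 be an integer. Then the function d ↦ (r^d - 1)/(r^{d+1}(r-1)(1 - ((r-1)/r)^d)) is decreasing in d ≥ 1. -/
/-- The ratio `g(d) = (r^d - 1)/(r^{d+1}(r-1)(1 - ((r-1)/r)^d))` is decreasing in `d ≥ 1`. -/
theorem ratio_decreasing (r : ℕ) (hr : 3 ≤ r) (d₁ d₂ : ℕ) (hd₁ : 1 ≤ d₁) (hd : d₁ ≤ d₂) :
    ((r : ℝ) ^ d₂ - 1) / ((r : ℝ) ^ (d₂ + 1) * ((r : ℝ) - 1) * (1 - (((r : ℝ) - 1) / r) ^ d₂))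
      ≤ ((r : ℝ) ^ d₁ - 1) / ((r : ℝ) ^ (d₁ + 1) * ((r : ℝ) - 1) * (1 - (((r : ℝ) - 1) / r) ^ d₁)) := by
  set x : ℝ := (r : ℝ) with hxdef
  have hx3 : (3 : ℝ) ≤ x := by rw [hxdef]; exact_mod_cast hr
  have hx0 : (0 : ℝ) < x := by linarith
  have hs0 : (0 : ℝ) < x - 1 := by linarith
  have hden : ∀ n : ℕ, 1 ≤ n → 0 < x ^ n - (x - 1) ^ n := by
    intro n hn
    have := pow_lt_pow_left₀ (show x - 1 < x by linarith) hs0.le (by omega : n ≠ 0)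
    linarith
  -- key step inequality for h(d) = (x^d - 1)/(x^d - (x-1)^d)
  have step : ∀ d : ℕ, 1 ≤ d →
      (x ^ (d + 1) - 1) / (x ^ (d + 1) - (x - 1) ^ (d + 1))
        ≤ (x ^ d - 1) / (x ^ d - (x - 1) ^ d) := by
    intro d hdd
    rw [div_le_div_iff₀ (hden _ (by omega)) (hden _ hdd)]
    have h1 : (x - 1) ≤ (x - 1) ^ d := le_self_pow₀ (by linarith) (by omega)
    have h2 : 0 < (x - 1) ^ d := pow_pos hs0 d
    have h3 : 0 < x ^ d := pow_pos hx0 d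
    have h4 : 0 ≤ x ^ d * ((x - 1) ^ d - (x - 1)) := mul_nonneg h3.le (by linarith)
    rw [pow_succ, pow_succ]
    nlinarith [mul_nonneg h3.le (by linarith : (0:ℝ) ≤ (x - 1) ^ d - (x - 1)),
      mul_nonneg h2.le (by linarith : (0:ℝ) ≤ x - 2)]
  -- h is antitone on [1, ∞)
  have hmono : ∀ d, d₁ ≤ d →
      (x ^ d - 1) / (x ^ d - (x - 1) ^ d)
        ≤ (x ^ d₁ - 1) / (x ^ d₁ - (x - 1) ^ d₁) := by
    intro d hd
    induction d, hd using Nat.le_induction with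
    | base => exact le_rfl
    | succ n hn ih => exact (step n (le_trans hd₁ hn)).trans ih
  -- rewrite the original form
  have hform : ∀ d : ℕ,
      x ^ (d + 1) * (x - 1) * (1 - ((x - 1) / x) ^ d)
        = (x ^ d - (x - 1) ^ d) * (x * (x - 1)) := by
    intro d
    have hxne : x ≠ 0 := ne_of_gt hx0
    rw [div_pow]
    field_simp
    ring
  rw [hform d₁, hform d₂]
  have hxs : 0 < x * (x - 1) := by positivity
  have h := div_le_div_of_nonneg_right (hmono d₂ hd) hxs.le
  rwa [div_div, div_div] at h
end
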